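/- arXiv:2408.13266 — 5 statements merged into one kernel-verified Lean document; each statement's English description precedes it below -/
import Mathlib

section
/- For all real numbers a, b, c, it holds that ∫_{−∞}^{c} Φ(a + b·x)·φ(x) dx = Φ₂(c, a/√(1+b²); −b/√(1+b²)). -/
/-!
Write `s = √(1 + b²)` and `ρ = -b / s`. Then `1 - ρ² = s⁻²`, and the exponent of the bivariate
density becomes `-(u² + (s v + b u)²) / 2`. The substitution `z = s v + b u` in the inner integral
turns `Φ₂(c, a / s; ρ)` into `∫_{u < c} φ(u) ∫_{z < a + b u} φ(z) dz du`, which is the left-hand side.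
-/

open MeasureTheory

/-- The standard normal density `φ(x) = (2π)^{-1/2} e^{-x²/2}`. -/
noncomputable def stdGaussianPDF (x : ℝ) : ℝ :=
  (Real.sqrt (2 * Real.pi))⁻¹ * Real.exp (-x ^ 2 / 2)

/-- The standard normal cumulative distribution function `Φ`. -/
noncomputable def stdGaussianCDF (x : ℝ) : ℝ :=
  ∫ z in Set.Iio x, stdGaussianPDF z

/-- The standard bivariate normal cumulative distribution function `Φ₂(x, y; ρ)`. -/
noncomputable def biGaussianCDF (x y ρ : ℝ) : ℝ :=
  (2 * Real.pi * Real.sqrt (1 - ρ ^ 2))⁻¹ *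
    ∫ u in Set.Iio x, ∫ v in Set.Iio y,
      Real.exp (-(u ^ 2 + v ^ 2 - 2 * ρ * u * v) / (2 * (1 - ρ ^ 2)))

open Set Real

theorem integral_comp_mul_add_Iio {E : Type*} [NormedAddCommGroup E] [NormedSpace ℝ E]
    (g : ℝ → E) (a k : ℝ) {b : ℝ} (hb : 0 < b) :
    ∫ x in Iio a, g (b * x + k) = b⁻¹ • ∫ x in Iio (b * a + k), g x := by
  calc ∫ x in Iio a, g (b * x + k)
      = ∫ x, (Iio (b * a + k)).indicator g (b * x + k) := by
        rw [← integral_indicator measurableSet_Iio]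
        congr 1 with x
        simp only [indicator_apply, mem_Iio, add_lt_add_iff_right, mul_lt_mul_iff_right₀ hb]
    _ = |b⁻¹| • ∫ y, (Iio (b * a + k)).indicator g (y + k) :=
        Measure.integral_comp_mul_left (fun y ↦ (Iio (b * a + k)).indicator g (y + k)) b
    _ = b⁻¹ • ∫ x in Iio (b * a + k), g x := by
        rw [integral_add_right_eq_self, integral_indicator measurableSet_Iio,
          abs_of_pos (inv_pos.2 hb)]

theorem one_sub_sq_neg_div_eq {b s : ℝ} (hs : s ≠ 0) (hs2 : s ^ 2 = 1 + b ^ 2) :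
    1 - (-b / s) ^ 2 = (s ^ 2)⁻¹ := by
  field_simp
  linear_combination hs2

theorem biGaussian_exponent_eq {b s : ℝ} (hs : s ≠ 0) (hs2 : s ^ 2 = 1 + b ^ 2) (u v : ℝ) :
    -(u ^ 2 + v ^ 2 - 2 * (-b / s) * u * v) / (2 * (1 - (-b / s) ^ 2))
      = -(u ^ 2 + (s * v + b * u) ^ 2) / 2 := by
  rw [one_sub_sq_neg_div_eq hs hs2]
  field_simp
  linear_combination (-(u ^ 2)) * hs2

theorem biGaussianCDF_neg_div_sqrt_one_add_sq (x y b : ℝ) :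
    biGaussianCDF x y (-b / √(1 + b ^ 2)) = √(1 + b ^ 2) * (2 * π)⁻¹ *
      ∫ u in Iio x, ∫ v in Iio y, exp (-(u ^ 2 + (√(1 + b ^ 2) * v + b * u) ^ 2) / 2) := by
  have hs : 0 < √(1 + b ^ 2) := by positivity
  have hs2 : √(1 + b ^ 2) ^ 2 = 1 + b ^ 2 := Real.sq_sqrt (by positivity)
  simp_rw [biGaussianCDF, biGaussian_exponent_eq hs.ne' hs2, one_sub_sq_neg_div_eq hs.ne' hs2,
    Real.sqrt_inv, Real.sqrt_sq hs.le, mul_inv, inv_inv, mul_comm]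

theorem stdGaussianCDF_mul_stdGaussianPDF (t u : ℝ) :
    stdGaussianCDF t * stdGaussianPDF u
      = (2 * π)⁻¹ * ∫ z in Iio t, exp (-(u ^ 2 + z ^ 2) / 2) := by
  rw [stdGaussianCDF, ← integral_mul_const, ← integral_const_mul]
  congr 1 with z
  have hsqrt : (2 * π)⁻¹ = (√(2 * π))⁻¹ * (√(2 * π))⁻¹ := by
    rw [← mul_inv, Real.mul_self_sqrt (by positivity)]
  rw [stdGaussianPDF, stdGaussianPDF, hsqrt, add_comm, neg_add, add_div, exp_add]
  ring

/-- `∫_{-∞}^c Φ(a + b x) φ(x) dx = Φ₂(c, a/√(1+b²); -b/√(1+b²))`. -/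
theorem integral_cdf_mul_pdf (a b c : ℝ) :
    ∫ x in Set.Iio c, stdGaussianCDF (a + b * x) * stdGaussianPDF x
      = biGaussianCDF c (a / Real.sqrt (1 + b ^ 2)) (-b / Real.sqrt (1 + b ^ 2)) := by
  have hs : 0 < √(1 + b ^ 2) := by positivity
  rw [biGaussianCDF_neg_div_sqrt_one_add_sq, ← integral_const_mul]
  refine setIntegral_congr_fun measurableSet_Iio fun u _ ↦ ?_
  rw [integral_comp_mul_add_Iio (fun z ↦ exp (-(u ^ 2 + z ^ 2) / 2)) _ _ hs,
    mul_div_cancel₀ _ hs.ne', stdGaussianCDF_mul_stdGaussianPDF, smul_eq_mul]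
  field_simp
end

section
/- Let m ∈ ℝ, s > 0, u > 0, c > 0, and set w := log(u/c) − m. Then the expectation of (u − c·e^Z)₊ for Z distributed according to the Gaussian measure with mean m and variance s² equals u·Φ(w/s) − c·e^{m + s²/2}·Φ(w/s − s); that is, ∫_ℝ max(u − c·e^z, 0) d(gaussianReal m s²)(z) = u·Φ(w/s) − c·e^{m + s²/2}·Φ(w/s − s). -/
open MeasureTheory ProbabilityTheory

lemma stdGaussianPDF_eq : stdGaussianPDF = gaussianPDFReal 0 1 := by
  funext x
  simp [stdGaussianPDF, gaussianPDFReal_def]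

lemma integrable_stdGaussianPDF : Integrable stdGaussianPDF := by
  rw [stdGaussianPDF_eq]; exact integrable_gaussianPDFReal 0 1

lemma shift_integral (t s : ℝ) :
    ∫ x in Set.Iio t, stdGaussianPDF (x - s) = stdGaussianCDF (t - s) := by
  rw [stdGaussianCDF, ← integral_indicator measurableSet_Iio,
    ← integral_indicator measurableSet_Iio]
  rw [← integral_sub_right_eq_self (fun y => (Set.Iio (t - s)).indicator stdGaussianPDF y) s]
  congr 1
  funext x
  simp [Set.indicator_apply, Set.mem_Iio, sub_lt_sub_iff_right]

/-- For `Z` Gaussian with mean `m` and variance `s²`,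
`E[(u - c e^Z)₊] = u Φ(w/s) - c e^{m + s²/2} Φ(w/s - s)` with `w = log(u/c) - m`. -/
theorem integral_pos_part_lognormal (m s u c : ℝ) (hs : 0 < s) (hu : 0 < u) (hc : 0 < c) :
    (∫ z, max (u - c * Real.exp z) 0 ∂(gaussianReal m ⟨s ^ 2, sq_nonneg s⟩))
      = u * stdGaussianCDF ((Real.log (u / c) - m) / s)
        - c * Real.exp (m + s ^ 2 / 2)
          * stdGaussianCDF ((Real.log (u / c) - m) / s - s) := by
  have hs0 : s ≠ 0 := hs.ne'
  set v : NNReal := ⟨s ^ 2, sq_nonneg s⟩ with hv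
  have hv0 : v ≠ 0 := by
    intro h
    have h2 : (v : ℝ) = 0 := by rw [h]; simp
    have h3 : s ^ 2 = 0 := h2
    exact hs0 (pow_eq_zero_iff two_ne_zero |>.mp h3)
  set t : ℝ := (Real.log (u / c) - m) / s with ht
  -- Step 1: write as an integral against the density over volume
  have step1 : (∫ z, max (u - c * Real.exp z) 0 ∂(gaussianReal m v))
      = ∫ z, gaussianPDFReal m v z * max (u - c * Real.exp z) 0 := by
    rw [gaussianReal_of_var_ne_zero _ hv0]
    have : gaussianPDF m v = fun x => ((Real.toNNReal (gaussianPDFReal m v x) : NNReal) : ENNReal) := by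
      funext x; rw [gaussianPDF_def]; rfl
    rw [this, integral_withDensity_eq_integral_smul
      ((measurable_gaussianPDFReal m v).real_toNNReal) _]
    congr 1
    funext x
    rw [NNReal.smul_def, Real.coe_toNNReal _ (gaussianPDFReal_nonneg m v x), smul_eq_mul]
  -- define F
  set F : ℝ → ℝ := fun z => gaussianPDFReal m v z * max (u - c * Real.exp z) 0 with hF
  -- Step 2: change of variables z = s x + m
  have step2 : (∫ z, F z) = s * ∫ x, F (s * x + m) := by
    have h1 : (∫ x, F (s * x + m)) = |s⁻¹| • ∫ y, F (y + m) :=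
      MeasureTheory.Measure.integral_comp_mul_left (fun y => F (y + m)) s
    rw [h1, integral_add_right_eq_self F m, abs_of_pos (inv_pos.mpr hs), smul_eq_mul]
    field_simp
  -- Step 3: pointwise identity
  have step3 : ∀ x : ℝ, F (s * x + m)
      = s⁻¹ * (Set.Iio t).indicator
          (fun y => u * stdGaussianPDF y
            - c * Real.exp (m + s ^ 2 / 2) * stdGaussianPDF (y - s)) x := by
    intro x
    have hpdf : gaussianPDFReal m v (s * x + m) = s⁻¹ * stdGaussianPDF x := by
      have hvv : (v : ℝ) = s ^ 2 := rfl
      have hsqrt : Real.sqrt (2 * Real.pi * s ^ 2) = s * Real.sqrt (2 * Real.pi) := by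
        rw [show 2 * Real.pi * s ^ 2 = s ^ 2 * (2 * Real.pi) by ring,
          Real.sqrt_mul (sq_nonneg s), Real.sqrt_sq hs.le]
      rw [stdGaussianPDF]
      simp only [gaussianPDFReal_def, hvv]
      rw [hsqrt, mul_inv]
      have : -(s * x + m - m) ^ 2 / (2 * s ^ 2) = -x ^ 2 / 2 := by
        field_simp; ring
      rw [this]; ring
    have hexp : c * Real.exp (s * x + m) * stdGaussianPDF x
        = c * Real.exp (m + s ^ 2 / 2) * stdGaussianPDF (x - s) := by
      rw [stdGaussianPDF, stdGaussianPDF]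
      rw [show c * Real.exp (s * x + m) * ((Real.sqrt (2*Real.pi))⁻¹ * Real.exp (-x^2/2))
          = c * (Real.sqrt (2*Real.pi))⁻¹ * (Real.exp (s*x+m) * Real.exp (-x^2/2)) by ring,
        show c * Real.exp (m + s^2/2) * ((Real.sqrt (2*Real.pi))⁻¹ * Real.exp (-(x-s)^2/2))
          = c * (Real.sqrt (2*Real.pi))⁻¹ * (Real.exp (m+s^2/2) * Real.exp (-(x-s)^2/2)) by ring,
        ← Real.exp_add, ← Real.exp_add]
      congr 2
      ring
    by_cases hx : x < t
    · have hlt : c * Real.exp (s * x + m) < u := by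
        have h1 : s * x + m < Real.log (u / c) := by
          nlinarith [(mul_lt_mul_of_pos_left hx hs), mul_div_cancel₀ (Real.log (u / c) - m) hs0]
        have h2 : Real.exp (s * x + m) < u / c := by
          calc Real.exp (s * x + m) < Real.exp (Real.log (u / c)) := Real.exp_lt_exp.mpr h1
          _ = u / c := Real.exp_log (div_pos hu hc)
        calc c * Real.exp (s * x + m) < c * (u / c) := by
              exact (mul_lt_mul_of_pos_left h2 hc)
        _ = u := by field_simp
      rw [hF]
      simp only
      rw [max_eq_left (by linarith), Set.indicator_of_mem (show x ∈ Set.Iio t from hx), hpdf]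
      have : s⁻¹ * stdGaussianPDF x * (u - c * Real.exp (s * x + m))
          = s⁻¹ * (u * stdGaussianPDF x - c * Real.exp (s*x+m) * stdGaussianPDF x) := by ring
      rw [this, hexp]
    · have hge : u ≤ c * Real.exp (s * x + m) := by
        have h1 : Real.log (u / c) ≤ s * x + m := by
          have hx' : t ≤ x := le_of_not_gt hx
          nlinarith [mul_le_mul_of_nonneg_left hx' hs.le, mul_div_cancel₀ (Real.log (u / c) - m) hs0]
        have h2 : u / c ≤ Real.exp (s * x + m) := by
          calc u / c = Real.exp (Real.log (u / c)) := (Real.exp_log (div_pos hu hc)).symm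
          _ ≤ Real.exp (s * x + m) := Real.exp_le_exp.mpr h1
        calc u = c * (u / c) := by field_simp
        _ ≤ c * Real.exp (s * x + m) := mul_le_mul_of_nonneg_left h2 hc.le
      rw [hF]
      simp only
      rw [max_eq_right (by linarith), Set.indicator_of_notMem (show x ∉ Set.Iio t from hx), mul_zero, mul_zero]
  -- Step 4: integrate
  rw [step1, step2]
  simp only [step3]
  rw [integral_const_mul, integral_indicator measurableSet_Iio]
  have hint1 : IntegrableOn (fun y => u * stdGaussianPDF y) (Set.Iio t) :=
    (integrable_stdGaussianPDF.const_mul u).integrableOn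
  have hint2 : IntegrableOn (fun y => c * Real.exp (m + s ^ 2 / 2) * stdGaussianPDF (y - s))
      (Set.Iio t) :=
    ((integrable_stdGaussianPDF.comp_sub_right s).const_mul _).integrableOn
  rw [integral_sub hint1 hint2, integral_const_mul, integral_const_mul, shift_integral]
  rw [← stdGaussianCDF]
  field_simp
end

section
/- Let (Ω, ℱ, P) be a probability space, let G and V be real random variables such that G has Gaussian law with mean m ∈ ℝ and variance s² (s > 0), G and V are independent, and let D ∈ ℝ be such that P(V < D) > 0. Then for every c > 0, with w := −log(c) − m, the conditional expectation of (1 − c·e^G)₊ given the event {V < D} equals Φ(w/s) − c·e^{m + s²/2}·Φ(w/s − s); that is, E[(1 − c·e^G)₊ · 1_{{V < D}}] / P(V < D) = Φ(w/s) − c·e^{m + s²/2}·Φ(w/s − s). -/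
/-!
Since `G` is independent of the event `{V < D}`, the integral over that event factors as
`P(V < D) · E[(1 - c e^G)₊]`, so the conditioning disappears and only a Gaussian integral is left.
The payoff is positive exactly on the half-line `G < -log c`. On it, the `1` contributes the
Gaussian probability of the half-line, and `e^G` is handled by exponential tilting:
`e^x` times the `N(μ, v)` density is `e^{μ + v/2}` times the `N(μ + v, v)` density.
-/

open MeasureTheory ProbabilityTheory

open scoped NNReal
open Set

lemma gaussianPDFReal_zero_one : gaussianPDFReal 0 1 = stdGaussianPDF := by
  ext x
  simp [gaussianPDFReal, stdGaussianPDF, neg_div]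

lemma gaussianReal_zero_one_real_Iio (t : ℝ) :
    (gaussianReal 0 1).real (Iio t) = stdGaussianCDF t := by
  rw [measureReal_def, gaussianReal_apply_eq_integral 0 one_ne_zero, ENNReal.toReal_ofReal
    (setIntegral_nonneg measurableSet_Iio fun x _ ↦ gaussianPDFReal_nonneg _ _ _),
    gaussianPDFReal_zero_one, stdGaussianCDF]

lemma gaussianReal_eq_map_sqrt_mul_add (μ : ℝ) (v : ℝ≥0) :
    gaussianReal μ v = (gaussianReal 0 1).map (fun z ↦ √v * z + μ) := by
  rw [show (fun z ↦ √v * z + μ) = (· + μ) ∘ (√v * ·) from rfl,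
    ← Measure.map_map (measurable_add_const μ) (measurable_const_mul _),
    gaussianReal_map_const_mul, gaussianReal_map_add_const, mul_zero, zero_add, mul_one]
  congr
  ext
  exact (Real.sq_sqrt v.2).symm

lemma gaussianReal_real_Iio (μ : ℝ) {v : ℝ≥0} (hv : v ≠ 0) (L : ℝ) :
    (gaussianReal μ v).real (Iio L) = stdGaussianCDF ((L - μ) / √v) := by
  have hsqrt : 0 < √(v : ℝ) := Real.sqrt_pos.2 (NNReal.coe_pos.2 (pos_iff_ne_zero.2 hv))
  have hpre : (fun z ↦ √v * z + μ) ⁻¹' Iio L = Iio ((L - μ) / √v) := by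
    ext z
    simp [lt_div_iff₀ hsqrt, mul_comm, lt_sub_iff_add_lt]
  rw [gaussianReal_eq_map_sqrt_mul_add, map_measureReal_apply (by fun_prop) measurableSet_Iio,
    hpre, gaussianReal_zero_one_real_Iio]

lemma gaussianPDFReal_mul_exp (μ : ℝ) (v : ℝ≥0) (x : ℝ) :
    gaussianPDFReal μ v x * Real.exp x
      = Real.exp (μ + v / 2) * gaussianPDFReal (μ + v) v x := by
  rcases eq_or_ne v 0 with rfl | hv
  · simp [gaussianPDFReal_zero_var]
  have hv' : (v : ℝ) ≠ 0 := by exact_mod_cast hv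
  simp only [gaussianPDFReal]
  rw [mul_assoc, mul_left_comm (Real.exp _), ← Real.exp_add, ← Real.exp_add]
  congr 2
  field_simp
  ring

lemma setIntegral_exp_gaussianReal (μ : ℝ) {v : ℝ≥0} (hv : v ≠ 0) {S : Set ℝ}
    (hS : MeasurableSet S) :
    ∫ x in S, Real.exp x ∂gaussianReal μ v
      = Real.exp (μ + v / 2) * (gaussianReal (μ + v) v).real S := by
  rw [← integral_indicator hS, integral_gaussianReal_eq_integral_smul hv, measureReal_def,
    gaussianReal_apply_eq_integral _ hv, ENNReal.toReal_ofReal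
      (setIntegral_nonneg hS fun x _ ↦ gaussianPDFReal_nonneg _ _ _), ← integral_const_mul,
    ← integral_indicator hS]
  congr 1 with x
  by_cases hx : x ∈ S <;> simp [hx, gaussianPDFReal_mul_exp]

lemma max_one_sub_mul_exp_eq_indicator {c : ℝ} (hc : 0 < c) (x : ℝ) :
    max (1 - c * Real.exp x) 0
      = (Iio (-Real.log c)).indicator (fun x ↦ 1 - c * Real.exp x) x := by
  have hlt : c * Real.exp x < 1 ↔ x < -Real.log c := by
    rw [← Real.exp_lt_exp (x := x), Real.exp_neg, Real.exp_log hc, mul_comm, ← lt_div_iff₀ hc,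
      one_div]
  by_cases hx : x < -Real.log c
  · rw [indicator_of_mem (mem_Iio.2 hx), max_eq_left (by linarith [hlt.2 hx])]
  · rw [indicator_of_notMem (mt mem_Iio.1 hx),
      max_eq_right (by linarith [not_lt.1 (mt hlt.1 hx)])]

lemma integral_max_one_sub_mul_exp_gaussianReal (μ : ℝ) {v : ℝ≥0} (hv : v ≠ 0) {c : ℝ}
    (hc : 0 < c) :
    ∫ x, max (1 - c * Real.exp x) 0 ∂gaussianReal μ v
      = stdGaussianCDF ((-Real.log c - μ) / √v)
        - c * Real.exp (μ + v / 2) * stdGaussianCDF ((-Real.log c - μ) / √v - √v) := by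
  have hsqrt : 0 < √(v : ℝ) := Real.sqrt_pos.2 (NNReal.coe_pos.2 (pos_iff_ne_zero.2 hv))
  have hshift : (-Real.log c - (μ + v)) / √v = (-Real.log c - μ) / √v - √v := by
    field_simp
    rw [Real.sq_sqrt v.coe_nonneg]
    ring
  have hexp : Integrable Real.exp (gaussianReal μ v) := by
    simpa using integrable_exp_mul_gaussianReal (μ := μ) (v := v) 1
  simp_rw [max_one_sub_mul_exp_eq_indicator hc]
  rw [integral_indicator measurableSet_Iio,
    integral_sub (integrable_const 1).integrableOn (hexp.const_mul c).integrableOn,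
    setIntegral_const, integral_const_mul, setIntegral_exp_gaussianReal μ hv measurableSet_Iio,
    gaussianReal_real_Iio μ hv, gaussianReal_real_Iio _ hv, hshift, smul_eq_mul, mul_one,
    mul_assoc]

theorem condExp_LGD_financial_asset_general {Ω : Type*} [MeasurableSpace Ω]
    (P : Measure Ω)
    (G V : Ω → ℝ) (hVmeas : Measurable V)
    (m s : ℝ) (hs : 0 < s)
    (hlaw : P.map G = gaussianReal m ⟨s ^ 2, sq_nonneg s⟩)
    (hindep : IndepFun G V P)
    (D : ℝ) (hD : 0 < (P {ω | V ω < D}).toReal)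
    (c : ℝ) (hc : 0 < c) :
    (∫ ω in {ω | V ω < D}, max (1 - c * Real.exp (G ω)) 0 ∂P)
        / (P {ω | V ω < D}).toReal
      = stdGaussianCDF ((-Real.log c - m) / s)
        - c * Real.exp (m + s ^ 2 / 2)
          * stdGaussianCDF ((-Real.log c - m) / s - s) := by
  -- `⟨s ^ 2, _⟩` elaborates in the subtype `{r // 0 ≤ r}`, not in `ℝ≥0`, which blocks instance
  -- search and rewriting; `NNReal.mk` restores the intended type.
  have hlaw' : P.map G = gaussianReal m (.mk (s ^ 2) (sq_nonneg s)) := hlaw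
  have hv : NNReal.mk (s ^ 2) (sq_nonneg s) ≠ 0 := by
    rw [← NNReal.coe_ne_zero, NNReal.coe_mk]; positivity
  have hG : AEMeasurable G P :=
    .of_map_ne_zero (by rw [hlaw']; exact IsProbabilityMeasure.ne_zero _)
  have hA : MeasurableSet[.comap V inferInstance] {ω | V ω < D} := ⟨Iio D, measurableSet_Iio, rfl⟩
  have hF : Continuous fun x : ℝ ↦ max (1 - c * Real.exp x) 0 := by fun_prop
  rw [← measureReal_def] at hD ⊢
  rw [((IndepFun_iff_Indep _ _ _).1 hindep.symm).setIntegral_eq_mul hVmeas.comap_le hG hA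
      hF.aestronglyMeasurable, mul_div_cancel_left₀ _ hD.ne',
    ← integral_map hG hF.aestronglyMeasurable, hlaw',
    integral_max_one_sub_mul_exp_gaussianReal m hv hc, NNReal.coe_mk, Real.sqrt_sq hs.le]

/-- If `G` is Gaussian with mean `m`, variance `s²`, independent of `V`, and `P(V < D) > 0`,
then `E[(1 - c e^G)₊ | V < D] = Φ(w/s) - c e^{m + s²/2} Φ(w/s - s)` with `w = -log c - m`. -/
theorem condExp_LGD_financial_asset {Ω : Type*} [MeasurableSpace Ω]
    (P : Measure Ω) [IsProbabilityMeasure P]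
    (G V : Ω → ℝ) (hGmeas : Measurable G) (hVmeas : Measurable V)
    (m s : ℝ) (hs : 0 < s)
    (hlaw : P.map G = gaussianReal m ⟨s ^ 2, sq_nonneg s⟩)
    (hindep : IndepFun G V P)
    (D : ℝ) (hD : 0 < (P {ω | V ω < D}).toReal)
    (c : ℝ) (hc : 0 < c) :
    (∫ ω in {ω | V ω < D}, max (1 - c * Real.exp (G ω)) 0 ∂P)
        / (P {ω | V ω < D}).toReal
      = stdGaussianCDF ((-Real.log c - m) / s)
        - c * Real.exp (m + s ^ 2 / 2)
          * stdGaussianCDF ((-Real.log c - m) / s - s) :=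
  condExp_LGD_financial_asset_general P G V hVmeas m s hs hlaw hindep D hD c hc
end

section
/- Let I ∈ ℕ*, σ > 0, φ ≥ 0, δ ≥ 0, and let (for i, j ∈ {1,…,I}) Y_i, N_i, H_i, C_i, Z_{ji}, P_i, W_i, A_i be strictly positive reals, τ_i ≥ 0 with τ_i·δ < 1, ζ_{ji} ≥ 0, κ_i ≥ 0, ψ_i > 0, λ_{ji} > 0. Assume: (a) production: Y_i = A_i·N_i^{ψ_i}·Π_j Z_{ji}^{λ_{ji}}; (b) firm first-order conditions: N_i = ψ_i·Y_i·(1 − τ_i δ)·P_i / W_i and Z_{ji} = λ_{ji}·Y_i·(1 − τ_i δ)·P_i / ((1 + ζ_{ji} δ)·P_j); (c) household first-order conditions: P_i/W_i = (1 + κ_i δ)^{−1}·H_i^{−φ}·C_i^{−σ} and P_i/P_j = ((1 + κ_j δ)/(1 + κ_i δ))·(C_i/C_j)^{−σ}; (d) market clearing: Y_i = C_i + Σ_j Z_{ij} and H_i = N_i. Define Ψ_i := ψ_i·(1 − τ_i δ)/(1 + κ_i δ) and Λ_{ji} := λ_{ji}·((1 − τ_i δ)/(1 + ζ_{ji} δ))·((1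 + κ_j δ)/(1 + κ_i δ)). Then for every i: Y_i = C_i + Σ_j Λ_{ij}·(C_j/C_i)^{−σ}·Y_j and Y_i = A_i·(Ψ_i·C_i^{−σ}·Y_i)^{ψ_i/(1+φ)}·Π_j (Λ_{ji}·(C_i/C_j)^{−σ}·Y_i)^{λ_{ji}}. -/
open Finset

/-- The market-equilibrium system of the multisectoral economy with carbon price `δ`:
from the production function, the firm and household first-order conditions and the
market-clearing conditions one derives, with
`Ψ_i = ψ_i (1 - τ_i δ)/(1 + κ_i δ)` and
`Λ_{ji} = λ_{ji} ((1 - τ_i δ)/(1 + ζ_{ji} δ)) ((1 + κ_j δ)/(1 + κ_i δ))`, the equations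
`Y_i = C_i + Σ_j Λ_{ij} (C_j/C_i)^{-σ} Y_j` and
`Y_i = A_i (Ψ_i C_i^{-σ} Y_i)^{ψ_i/(1+φ)} Π_j (Λ_{ji} (C_i/C_j)^{-σ} Y_i)^{λ_{ji}}`. -/
theorem multisector_equilibrium_system (I : ℕ) (hI : 0 < I)
    (σ φ δ : ℝ) (hσ : 0 < σ) (hφ : 0 ≤ φ) (hδ : 0 ≤ δ)
    (Y N H C P W A : Fin I → ℝ) (Z : Fin I → Fin I → ℝ)
    (hY : ∀ i, 0 < Y i) (hN : ∀ i, 0 < N i) (hH : ∀ i, 0 < H i)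
    (hC : ∀ i, 0 < C i) (hP : ∀ i, 0 < P i) (hW : ∀ i, 0 < W i)
    (hA : ∀ i, 0 < A i) (hZ : ∀ j i, 0 < Z j i)
    (τ : Fin I → ℝ) (hτ0 : ∀ i, 0 ≤ τ i) (hτ1 : ∀ i, τ i * δ < 1)
    (ζ : Fin I → Fin I → ℝ) (hζ : ∀ j i, 0 ≤ ζ j i)
    (κ : Fin I → ℝ) (hκ : ∀ i, 0 ≤ κ i)
    (ψ : Fin I → ℝ) (hψ : ∀ i, 0 < ψ i)
    (lam : Fin I → Fin I → ℝ) (hlam : ∀ j i, 0 < lam j i)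
    -- (a) production
    (hprod : ∀ i, Y i = A i * N i ^ ψ i * ∏ j, Z j i ^ lam j i)
    -- (b) firm first-order conditions
    (hfocN : ∀ i, N i = ψ i * Y i * (1 - τ i * δ) * P i / W i)
    (hfocZ : ∀ j i, Z j i =
      lam j i * Y i * (1 - τ i * δ) * P i / ((1 + ζ j i * δ) * P j))
    -- (c) household first-order conditions
    (hhFOC1 : ∀ i, P i / W i = (1 + κ i * δ)⁻¹ * H i ^ (-φ) * C i ^ (-σ))
    (hhFOC2 : ∀ i j, P i / P j =
      ((1 + κ j * δ) / (1 + κ i * δ)) * (C i / C j) ^ (-σ))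
    -- (d) market clearing
    (hclear : ∀ i, Y i = C i + ∑ j, Z i j)
    (hlabor : ∀ i, H i = N i) :
    ∀ i,
      (Y i = C i + ∑ j,
        (lam i j * ((1 - τ j * δ) / (1 + ζ i j * δ)) *
            ((1 + κ i * δ) / (1 + κ j * δ)))
          * (C j / C i) ^ (-σ) * Y j) ∧
      (Y i = A i *
        ((ψ i * (1 - τ i * δ) / (1 + κ i * δ)) * C i ^ (-σ) * Y i) ^ (ψ i / (1 + φ)) *
        ∏ j,
          ((lam j i * ((1 - τ i * δ) / (1 + ζ j i * δ)) *
              ((1 + κ j * δ) / (1 + κ i * δ)))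
            * (C i / C j) ^ (-σ) * Y i) ^ lam j i) := by
  have h1τ : ∀ i, 0 < 1 - τ i * δ := fun i => sub_pos.2 (hτ1 i)
  have h1κ : ∀ i, 0 < 1 + κ i * δ := fun i => by
    have := mul_nonneg (hκ i) hδ; linarith
  have h1ζ : ∀ j i, 0 < 1 + ζ j i * δ := fun j i => by
    have := mul_nonneg (hζ j i) hδ; linarith
  -- value of intermediate inputs
  have Zval : ∀ j i, Z j i =
      (lam j i * ((1 - τ i * δ) / (1 + ζ j i * δ)) * ((1 + κ j * δ) / (1 + κ i * δ)))
        * (C i / C j) ^ (-σ) * Y i := by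
    intro j i
    have hp : P i = ((1 + κ j * δ) / (1 + κ i * δ)) * (C i / C j) ^ (-σ) * P j :=
      (div_eq_iff (hP j).ne').1 (hhFOC2 i j)
    rw [hfocZ j i, hp]
    have h1 := (h1κ i).ne'
    have h2 := (h1κ j).ne'
    have h3 := (h1ζ j i).ne'
    have h4 := (hP j).ne'
    field_simp
  -- value of labor
  have hNval : ∀ i, N i ^ ψ i =
      ((ψ i * (1 - τ i * δ) / (1 + κ i * δ)) * C i ^ (-σ) * Y i) ^ (ψ i / (1 + φ)) := by
    intro i
    have h1φ : (1 : ℝ) + φ ≠ 0 := by linarith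
    have key : N i ^ ((1 : ℝ) + φ) =
        (ψ i * (1 - τ i * δ) / (1 + κ i * δ)) * C i ^ (-σ) * Y i := by
      have h1 := hfocN i
      rw [mul_div_assoc, hhFOC1 i, hlabor i] at h1
      have hsplit : N i ^ ((1 : ℝ) + φ) = N i * N i ^ φ := by
        rw [Real.rpow_add (hN i), Real.rpow_one]
      rw [hsplit]
      nth_rewrite 1 [h1]
      rw [Real.rpow_neg (hN i).le]
      have hNφ : (N i ^ φ) ≠ 0 := (Real.rpow_pos_of_pos (hN i) φ).ne'
      have h2 := (h1κ i).ne'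
      field_simp
    have : N i ^ ψ i = (N i ^ ((1 : ℝ) + φ)) ^ (ψ i / (1 + φ)) := by
      rw [← Real.rpow_mul (hN i).le]
      congr 1
      field_simp
    rw [this, key]
  intro i
  constructor
  · rw [hclear i]
    congr 1
    exact Finset.sum_congr rfl fun j _ => Zval i j
  · calc Y i = A i * N i ^ ψ i * ∏ j, Z j i ^ lam j i := hprod i
      _ = _ := by
        rw [hNval i]
        congr 1
        exact Finset.prod_congr rfl fun j _ => by rw [← Zval j i]
end

section
/- Let u > 0, c > 0 and s > 0 be fixed. Then ∫_ℝ max(u − c·e^z, 0) d(gaussianReal m s²)(z) → u as m → −∞. -/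
open MeasureTheory ProbabilityTheory Filter

/-! Shifting the mean, `gaussianReal m (s²)` is the law of `Z + m` with `Z ~ gaussianReal 0 (s²)`,
so the expectation equals `∫ g (z + m) dN(0, s²)` with `g x = max (u - c eˣ) 0`. The integrand
`g` is bounded by `u` and tends to `u` at `-∞`, so dominated convergence gives the limit `u`. -/

section

variable {E : Type*} [NormedAddCommGroup E] [NormedSpace ℝ E]

theorem integral_gaussianReal_eq_integral_add (m : ℝ) (v : NNReal) (g : ℝ → E) :
    ∫ z, g z ∂gaussianReal m v = ∫ z, g (z + m) ∂gaussianReal 0 v := by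
  have hmap : (gaussianReal 0 v).map (MeasurableEquiv.addRight m) = gaussianReal m v := by
    simpa using gaussianReal_map_add_const (μ := 0) (v := v) m
  rw [← hmap, integral_map_equiv]
  rfl

variable [CompleteSpace E]

theorem tendsto_integral_comp_add_atBot {μ : Measure ℝ} [IsProbabilityMeasure μ] {g : ℝ → E}
    {C : ℝ} {L : E} (hg : StronglyMeasurable g) (hbound : ∀ x, ‖g x‖ ≤ C)
    (hlim : Tendsto g atBot (nhds L)) :
    Tendsto (fun m => ∫ z, g (z + m) ∂μ) atBot (nhds L) := by
  have hL : ∫ _, L ∂μ = L := by simp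
  rw [← hL]
  refine tendsto_integral_filter_of_dominated_convergence (fun _ => C)
    (Eventually.of_forall fun m =>
      (hg.comp_measurable (measurable_add_const m)).aestronglyMeasurable)
    (Eventually.of_forall fun m => ae_of_all _ fun z => hbound (z + m))
    (integrable_const C) (ae_of_all _ fun z => ?_)
  exact hlim.comp (tendsto_atBot_add_const_left _ z tendsto_id)

theorem tendsto_integral_gaussianReal_atBot (v : NNReal) {g : ℝ → E} {C : ℝ} {L : E}
    (hg : StronglyMeasurable g) (hbound : ∀ x, ‖g x‖ ≤ C) (hlim : Tendsto g atBot (nhds L)) :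
    Tendsto (fun m => ∫ z, g z ∂gaussianReal m v) atBot (nhds L) :=
  (tendsto_integral_comp_add_atBot hg hbound hlim).congr fun m =>
    (integral_gaussianReal_eq_integral_add m v g).symm

end

theorem norm_max_sub_mul_exp_le {u c : ℝ} (hu : 0 ≤ u) (hc : 0 ≤ c) (x : ℝ) :
    ‖max (u - c * Real.exp x) 0‖ ≤ u := by
  rw [Real.norm_of_nonneg (le_max_right _ _)]
  exact max_le (sub_le_self u (by positivity)) hu

theorem tendsto_max_sub_mul_exp_atBot {u : ℝ} (hu : 0 ≤ u) (c : ℝ) :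
    Tendsto (fun x => max (u - c * Real.exp x) 0) atBot (nhds u) := by
  have h := (tendsto_const_nhds (x := u)).sub (Real.tendsto_exp_atBot.const_mul c) |>.max
    (tendsto_const_nhds (x := (0 : ℝ)))
  rwa [mul_zero, sub_zero, max_eq_left hu] at h

theorem tendsto_integral_pos_part_lognormal_atBot_general (u c s : ℝ)
    (hu : 0 < u) (hc : 0 < c) :
    Tendsto (fun m : ℝ =>
        ∫ z, max (u - c * Real.exp z) 0 ∂(gaussianReal m ⟨s ^ 2, sq_nonneg s⟩))
      atBot (nhds u) :=
  tendsto_integral_gaussianReal_atBot _ (by fun_prop)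
    (norm_max_sub_mul_exp_le hu.le hc.le) (tendsto_max_sub_mul_exp_atBot hu.le c)

/-- No-collateral limit: for fixed `u, c, s > 0`, the expectation
`∫ (u - c e^z)₊ d(gaussianReal m s²)(z)` tends to `u` as the mean `m → -∞`. -/
theorem tendsto_integral_pos_part_lognormal_atBot (u c s : ℝ)
    (hu : 0 < u) (hc : 0 < c) (hs : 0 < s) :
    Tendsto (fun m : ℝ =>
        ∫ z, max (u - c * Real.exp z) 0 ∂(gaussianReal m ⟨s ^ 2, sq_nonneg s⟩))
      atBot (nhds u) :=
  tendsto_integral_pos_part_lognormal_atBot_general u c s hu hc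
end
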